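/- Let q ≥ 2 be an integer such that there exists a projective plane of order q (a point–line incidence structure with q² + q + 1 points in which any two distinct points lie on exactly one line, any two distinct lines meet in exactly one point, every line contains q + 1 points, and every point lies on q + 1 lines). Then, with n = q² + q + 1, the complete graph K_n admits a connected and complete (⌈q/2⌉ · n)-edge-coloring. -/

import Mathlib

/-!
Identify the vertices of `K_n` with the points of the plane. Every edge `ab` lies on a unique
line `l`, and the `q + 1` points of `l` carry the complete graph `K_{q+1}`, which we color with
`t = ⌊(q + 1) / 2⌋` colors so that every color class is connected and spans `l`: with the points
of `l` labelled by `ZMod (q + 1)`, give `ab` the color `⌊(a + b) / 2⌋ mod t`; the class of `j`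
contains all edges with `a + b ∈ {2j, 2j + 1}`, and these already link every `x` to `x + 1`.
Coloring `ab` by the pair (color on `l`, `l`) gives `t · n` colors, each class connected and
spanning its line. Any two lines meet in a point, which carries both lines' classes, so the
coloring is complete.
-/

open SimpleGraph

/-- The subgraph of `G` formed by the edges of color `i`. -/
def colorClassSubgraph {V : Type*} {k : ℕ} (G : SimpleGraph V) (c : Sym2 V → Fin k)
    (i : Fin k) : G.Subgraph where
  verts := {v | ∃ w, G.Adj v w ∧ c s(v, w) = i}
  Adj v w := G.Adj v w ∧ c s(v, w) = i
  adj_sub h := h.1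
  edge_vert h := ⟨_, h⟩
  symm := by
    constructor
    intro v w h
    exact ⟨h.1.symm, by rw [Sym2.eq_swap]; exact h.2⟩

/-- `c` is a complete edge-coloring of `G` with `k` colors: every color is used on some
edge, and every two distinct colors appear on a pair of edges sharing a vertex. -/
def IsCompleteEdgeColoring {V : Type*} {k : ℕ} (G : SimpleGraph V)
    (c : Sym2 V → Fin k) : Prop :=
  (∀ i : Fin k, ∃ e ∈ G.edgeSet, c e = i) ∧
  ∀ i j : Fin k, i ≠ j →
    ∃ u v w : V, G.Adj u v ∧ G.Adj u w ∧ c s(u, v) = i ∧ c s(u, w) = j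

/-- `c` is a connected edge-coloring: each color class induces a connected subgraph. -/
def IsConnectedEdgeColoring {V : Type*} {k : ℕ} (G : SimpleGraph V)
    (c : Sym2 V → Fin k) : Prop :=
  ∀ i : Fin k, (colorClassSubgraph G c i).Connected

def IsSpanningConnectedColoring {W κ : Type*} (c : Sym2 W → κ) : Prop :=
  ∀ j, (fromEdgeSet {e | c e = j}).Connected

theorem IsSpanningConnectedColoring.comp_map {V W κ : Type*} {c : Sym2 W → κ}
    (hc : IsSpanningConnectedColoring c) (f : V ≃ W) :
    IsSpanningConnectedColoring (c ∘ Sym2.map f) := fun j =>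
  (Iso.connected_iff ⟨f, by simp [f.injective.ne_iff]⟩).mpr (hc j)

theorem SimpleGraph.connected_of_forall_reachable_add_one {m : ℕ} [NeZero m]
    {G : SimpleGraph (ZMod m)} (h : ∀ x, G.Reachable x (x + 1)) : G.Connected := by
  have hk : ∀ (k : ℕ) x, G.Reachable x (x + k) := by
    intro k
    induction k with
    | zero => simp
    | succ k ih => exact fun x => (ih x).trans (by simpa [add_assoc] using h (x + k))
  refine .mk fun x y => ?_
  simpa using hk (y - x).val x

def halfSumColoring (m t : ℕ) [NeZero t] : Sym2 (ZMod m) → Fin t :=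
  Sym2.lift ⟨fun a b => Fin.ofNat t ((a + b).val / 2), fun a b => by simp only [add_comm]⟩

theorem reachable_halfSumColoring {m t : ℕ} [NeZero t] (j : Fin t) {a b : ZMod m}
    (h : (a + b).val / 2 = j) :
    (fromEdgeSet {e | halfSumColoring m t e = j}).Reachable a b := by
  rcases eq_or_ne a b with rfl | hab
  · rfl
  · refine Adj.reachable ((fromEdgeSet_adj _).2 ⟨Fin.ext ?_, hab⟩)
    simp [halfSumColoring, h]

theorem isSpanningConnectedColoring_halfSumColoring {m t : ℕ} [NeZero t] (h : 2 * t ≤ m) :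
    IsSpanningConnectedColoring (halfSumColoring m t) := by
  have : NeZero m := ⟨by have := NeZero.pos t; omega⟩
  intro j
  have hval : ∀ r, r < m → ((r : ℕ) : ZMod m).val = r := fun r hr => by
    rw [ZMod.val_natCast, Nat.mod_eq_of_lt hr]
  -- each class contains the sums `2j` and `2j + 1`, so `x, 2j - x, x + 1` is a walk in it
  refine connected_of_forall_reachable_add_one fun x => ?_
  set J : ZMod m := ((2 * j : ℕ) : ZMod m)
  have h₁ : (x + (J - x)).val / 2 = j := by
    rw [add_sub_cancel, hval _ (by omega)]; omega
  have h₂ : (J - x + (x + 1)).val / 2 = j := by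
    rw [show J - x + (x + 1) = ((2 * j + 1 : ℕ) : ZMod m) by push_cast [J]; ring,
      hval _ (by omega)]
    omega
  exact (reachable_halfSumColoring j h₁).trans (reachable_halfSumColoring j h₂)

theorem exists_isSpanningConnectedColoring {W : Type*} {t : ℕ} [NeZero t]
    (hW : 2 * t ≤ Nat.card W) : ∃ c : Sym2 W → Fin t, IsSpanningConnectedColoring c := by
  have : NeZero (Nat.card W) := ⟨by have := NeZero.pos t; omega⟩
  have : Finite W := Nat.finite_of_card_ne_zero (NeZero.ne _)
  exact ⟨_, (isSpanningConnectedColoring_halfSumColoring hW).comp_map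
    ((Finite.equivFin W).trans (ZMod.finEquiv _).toEquiv)⟩

def IsSpanningConnectedColoringOn {V κ : Type*} (c : Sym2 V → κ) (s : Set V) : Prop :=
  IsSpanningConnectedColoring (c ∘ Sym2.map (Subtype.val : s → V))

section LinearSpace

variable {V L κ : Type*} (I : V → L → Prop) [Nonempty L]

/-- A line through both ends of `e`: unique if `e` is not a loop, arbitrary if there is none. -/
noncomputable def lineThrough (e : Sym2 V) : L :=
  Classical.epsilon fun l => ∀ p ∈ e, I p l

variable {I}

theorem incident_lineThrough (hpoints : ∀ p p' : V, p ≠ p' → ∃! l : L, I p l ∧ I p' l)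
    {a b : V} (hab : a ≠ b) : I a (lineThrough I s(a, b)) ∧ I b (lineThrough I s(a, b)) := by
  obtain ⟨l, hl, -⟩ := hpoints a b hab
  have := Classical.epsilon_spec (p := fun l => ∀ p ∈ s(a, b), I p l) ⟨l, by simpa using hl⟩
  simpa [lineThrough] using this

theorem lineThrough_eq (hpoints : ∀ p p' : V, p ≠ p' → ∃! l : L, I p l ∧ I p' l)
    {a b : V} (hab : a ≠ b) {l : L} (ha : I a l) (hb : I b l) : lineThrough I s(a, b) = l :=
  (hpoints a b hab).unique (incident_lineThrough hpoints hab) ⟨ha, hb⟩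

variable (I)

noncomputable def lineColoring (g : L → Sym2 V → κ) (e : Sym2 V) : κ × L :=
  (g (lineThrough I e) e, lineThrough I e)

variable {I}

theorem lineColoring_eq_iff (hpoints : ∀ p p' : V, p ≠ p' → ∃! l : L, I p l ∧ I p' l)
    {g : L → Sym2 V → κ} {a b : V} (hab : a ≠ b) {j : κ} {l : L} :
    lineColoring I g s(a, b) = (j, l) ↔ I a l ∧ I b l ∧ g l s(a, b) = j := by
  constructor
  · intro h
    obtain ⟨hj, rfl⟩ := Prod.ext_iff.1 h
    exact ⟨(incident_lineThrough hpoints hab).1, (incident_lineThrough hpoints hab).2, hj⟩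
  · rintro ⟨ha, hb, rfl⟩
    simp [lineColoring, lineThrough_eq hpoints hab ha hb]

theorem exists_lineColoring_eq (hpoints : ∀ p p' : V, p ≠ p' → ∃! l : L, I p l ∧ I p' l)
    {g : L → Sym2 V → κ} {l : L} [Nontrivial {p | I p l}]
    (hg : IsSpanningConnectedColoringOn (g l) {p | I p l})
    {p : V} (hp : I p l) (j : κ) : ∃ b, p ≠ b ∧ lineColoring I g s(p, b) = (j, l) := by
  obtain ⟨b, hb⟩ := (hg j).preconnected.exists_adj_of_nontrivial ⟨p, hp⟩
  rw [fromEdgeSet_adj] at hb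
  have hpb : p ≠ b := fun h => hb.2 (Subtype.ext h)
  exact ⟨b, hpb, (lineColoring_eq_iff hpoints hpb).2 ⟨hp, b.2, hb.1⟩⟩

theorem isCompleteEdgeColoring_lineColoring
    (hpoints : ∀ p p' : V, p ≠ p' → ∃! l : L, I p l ∧ I p' l)
    (hmeet : ∀ l l' : L, l ≠ l' → ∃ p, I p l ∧ I p l')
    [∀ l, Nontrivial {p | I p l}] {g : L → Sym2 V → κ}
    (hg : ∀ l, IsSpanningConnectedColoringOn (g l) {p | I p l})
    {k : ℕ} (E : κ × L ≃ Fin k) :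
    IsCompleteEdgeColoring ⊤ (E ∘ lineColoring I g) := by
  have hcommon : ∀ l l', ∃ p, I p l ∧ I p l' := fun l l' => by
    rcases eq_or_ne l l' with rfl | hll'
    · obtain ⟨⟨p, hp⟩⟩ : Nonempty {p | I p l} := inferInstance
      exact ⟨p, hp, hp⟩
    · exact hmeet l l' hll'
  have hspan : ∀ {p l} (j : κ), I p l →
      ∃ b, p ≠ b ∧ E (lineColoring I g s(p, b)) = E (j, l) := fun j hp => by
    obtain ⟨b, hpb, hb⟩ := exists_lineColoring_eq hpoints (hg _) hp j
    exact ⟨b, hpb, congrArg E hb⟩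
  refine ⟨fun i => ?_, fun i i' _ => ?_⟩
  · obtain ⟨⟨j, l⟩, rfl⟩ := E.surjective i
    obtain ⟨p, hp, -⟩ := hcommon l l
    obtain ⟨b, hpb, hb⟩ := hspan j hp
    exact ⟨s(p, b), hpb, hb⟩
  · obtain ⟨⟨j, l⟩, rfl⟩ := E.surjective i
    obtain ⟨⟨j', l'⟩, rfl⟩ := E.surjective i'
    obtain ⟨p, hp, hp'⟩ := hcommon l l'
    obtain ⟨v, hpv, hv⟩ := hspan j hp
    obtain ⟨w, hpw, hw⟩ := hspan j' hp'
    exact ⟨p, v, w, hpv, hpw, hv, hw⟩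

theorem isConnectedEdgeColoring_lineColoring
    (hpoints : ∀ p p' : V, p ≠ p' → ∃! l : L, I p l ∧ I p' l)
    [∀ l, Nontrivial {p | I p l}] {g : L → Sym2 V → κ}
    (hg : ∀ l, IsSpanningConnectedColoringOn (g l) {p | I p l})
    {k : ℕ} (E : κ × L ≃ Fin k) :
    IsConnectedEdgeColoring ⊤ (E ∘ lineColoring I g) := by
  intro i
  obtain ⟨⟨j, l⟩, rfl⟩ := E.surjective i
  set H := colorClassSubgraph ⊤ (E ∘ lineColoring I g) (E (j, l))
  have hadj : ∀ {a b}, H.Adj a b ↔ a ≠ b ∧ I a l ∧ I b l ∧ g l s(a, b) = j := by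
    intro a b
    change a ≠ b ∧ E _ = E _ ↔ _
    rw [E.apply_eq_iff_eq]
    exact ⟨fun h => ⟨h.1, (lineColoring_eq_iff hpoints h.1).1 h.2⟩,
      fun h => ⟨h.1, (lineColoring_eq_iff hpoints h.1).2 h.2⟩⟩
  have hverts : ∀ {a}, a ∈ H.verts ↔ I a l := by
    intro a
    refine ⟨fun ⟨b, hb⟩ => (hadj.1 hb).2.1, fun ha => ?_⟩
    obtain ⟨b, hab, hb⟩ := exists_lineColoring_eq hpoints (hg l) ha j
    exact ⟨b, hadj.2 ⟨hab, (lineColoring_eq_iff hpoints hab).1 hb⟩⟩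
  let φ : fromEdgeSet {e | (g l ∘ Sym2.map (Subtype.val : {p | I p l} → V)) e = j} →g
      H.coe :=
    { toFun := fun x => ⟨x.1, hverts.2 x.2⟩
      map_rel' := fun {x y} hxy => by
        rw [fromEdgeSet_adj] at hxy
        exact hadj.2 ⟨fun h => hxy.2 (Subtype.ext h), x.2, y.2, hxy.1⟩ }
  exact ⟨(hg l j).map φ fun v => ⟨⟨v.1, hverts.1 v.2⟩, rfl⟩⟩

theorem exists_complete_connected_coloring_of_linearSpace
    (hpoints : ∀ p p' : V, p ≠ p' → ∃! l : L, I p l ∧ I p' l)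
    (hmeet : ∀ l l' : L, l ≠ l' → ∃ p, I p l ∧ I p l')
    {t : ℕ} [NeZero t] (hline : ∀ l, 2 * t ≤ Nat.card {p | I p l})
    {k : ℕ} (E : Fin t × L ≃ Fin k) :
    ∃ c : Sym2 V → Fin k, IsCompleteEdgeColoring ⊤ c ∧ IsConnectedEdgeColoring ⊤ c := by
  have : ∀ l, Nontrivial {p | I p l} := fun l => by
    have := NeZero.pos t
    have := hline l
    have : Finite {p | I p l} := Nat.finite_of_card_ne_zero (by omega)
    exact Finite.one_lt_card_iff_nontrivial.1 (by omega)
  have hlocal : ∀ l, ∃ g : Sym2 V → Fin t, IsSpanningConnectedColoringOn g {p | I p l} :=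
    fun l => by
      obtain ⟨g₀, hg₀⟩ := exists_isSpanningConnectedColoring (hline l)
      obtain ⟨g, rfl⟩ := (Sym2.map.injective Subtype.val_injective).surjective_comp_right g₀
      exact ⟨g, hg₀⟩
  choose g hg using hlocal
  exact ⟨E ∘ lineColoring I g, isCompleteEdgeColoring_lineColoring hpoints hmeet hg E,
    isConnectedEdgeColoring_lineColoring hpoints hg E⟩

end LinearSpace

theorem card_lines_eq_card_points {P L : Type*} [Fintype P] [Fintype L] (I : P → L → Prop)
    {r : ℕ} (hr : 0 < r) (hline : ∀ l, {p | I p l}.ncard = r)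
    (hpoint : ∀ p, {l | I p l}.ncard = r) : Fintype.card L = Fintype.card P := by
  classical
  have := Finset.card_mul_eq_card_mul I (s := Finset.univ) (t := Finset.univ) (m := r) (n := r)
    (fun p _ => by rw [← hpoint p, Set.ncard_eq_toFinset_card', Set.toFinset_ofPred]; rfl)
    (fun l _ => by rw [← hline l, Set.ncard_eq_toFinset_card', Set.toFinset_ofPred]; rfl)
  simpa [hr.ne'] using this.symm

theorem connected_complete_coloring_of_projective_plane
    (q : ℕ) (hq : 2 ≤ q)
    (P L : Type*) [Fintype P] [Fintype L] (I : P → L → Prop)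
    (hP : Fintype.card P = q ^ 2 + q + 1)
    (hpoints : ∀ p p' : P, p ≠ p' → ∃! l : L, I p l ∧ I p' l)
    (hlines : ∀ l l' : L, l ≠ l' → ∃! p : P, I p l ∧ I p l')
    (hline_size : ∀ l : L, {p : P | I p l}.ncard = q + 1)
    (hpoint_deg : ∀ p : P, {l : L | I p l}.ncard = q + 1)
    (n : ℕ) (hn : n = q ^ 2 + q + 1) :
    ∃ c : Sym2 (Fin n) → Fin ((q + 1) / 2 * n),
      IsCompleteEdgeColoring (⊤ : SimpleGraph (Fin n)) c ∧
        IsConnectedEdgeColoring (⊤ : SimpleGraph (Fin n)) c := by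
  let eP : Fin n ≃ P := (Fintype.equivFinOfCardEq (hP.trans hn.symm)).symm
  let eL : L ≃ Fin n := Fintype.equivFinOfCardEq <|
    (card_lines_eq_card_points I (Nat.succ_pos q) hline_size hpoint_deg).trans (hP.trans hn.symm)
  have : Nonempty L := ⟨eL.symm ⟨0, by omega⟩⟩
  have : NeZero ((q + 1) / 2) := ⟨by omega⟩
  refine exists_complete_connected_coloring_of_linearSpace (I := fun a l => I (eP a) l)
    (fun a b hab => hpoints _ _ (eP.injective.ne hab)) (fun l l' hll' => ?_) (fun l => ?_)
    ((Equiv.prodCongr (Equiv.refl _) eL).trans finProdFinEquiv)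
  · obtain ⟨p, hp⟩ := (hlines l l' hll').exists
    exact ⟨eP.symm p, by simpa using hp⟩
  · have e : {a | I (eP a) l} ≃ {p | I p l} := eP.subtypeEquiv fun _ => Iff.rfl
    rw [Nat.card_congr e, Nat.card_coe_set_eq, hline_size]
    omega
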